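/- For every integer k ≥ 1, if G and H are finite connected simple graphs, then γ_k(G × H) ≥ γ_k(G) + γ_k(H) − 1, where γ_k(G × H) denotes the minimum cardinality of a set D of vertices of the direct product G × H such that every vertex of G × H is at distance at most k in G × H from some vertex of D. -/

import Mathlib

/-!
Take a minimum `k`-dominating set `D` of `G × H`, and inside it a minimal `E ⊆ D` such that
every fibre `α × {y}` contains a vertex within distance `k` of `E`; then the second coordinates
of `E` `k`-dominate `H`. Removing any `t ∈ E` from `E` leaves some fibre `α × {y₀}` that
`E \ {t}` does not reach, so that whole fibre is dominated by `(D \ E) ∪ {t}`, and the first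
coordinates of this set `k`-dominate `G`. Projections are graph homomorphisms, hence do not
increase distances, and `|E| + (|D| - |E| + 1) = γ_k(G × H) + 1`.
-/

/-- `S` is a distance `k`-dominating set of `G`: every vertex is joined to some
vertex of `S` by a path (walk) of length at most `k`. -/
def SimpleGraph.IsKDomSet {V : Type*} (G : SimpleGraph V) (k : ℕ) (S : Set V) : Prop :=
  ∀ v : V, ∃ u ∈ S, ∃ p : G.Walk u v, p.length ≤ k

/-- The distance `k`-domination number of `G`: the minimum cardinality of a
distance `k`-dominating set. -/
noncomputable def SimpleGraph.kDomNum {V : Type*} (G : SimpleGraph V) (k : ℕ) : ℕ :=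
  sInf {n : ℕ | ∃ S : Set V, G.IsKDomSet k S ∧ S.ncard = n}

/-- The direct (tensor) product of two simple graphs: `(g₁,h₁)` and `(g₂,h₂)` are adjacent
iff `g₁` is adjacent to `g₂` in `G` and `h₁` is adjacent to `h₂` in `H`. -/
def SimpleGraph.directProd {α β : Type*} (G : SimpleGraph α) (H : SimpleGraph β) :
    SimpleGraph (α × β) where
  Adj x y := G.Adj x.1 y.1 ∧ H.Adj x.2 y.2
  symm := ⟨fun _ _ h => ⟨h.1.symm, h.2.symm⟩⟩
  loopless := ⟨fun x h => G.irrefl h.1⟩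

namespace SimpleGraph

variable {V W : Type*} {G : SimpleGraph V} {k : ℕ}

def KDominates (G : SimpleGraph V) (k : ℕ) (S : Set V) (v : V) : Prop :=
  ∃ u ∈ S, ∃ p : G.Walk u v, p.length ≤ k

lemma KDominates.map {G' : SimpleGraph W} (f : G →g G') {S : Set V} {v : V}
    (h : G.KDominates k S v) : G'.KDominates k (f '' S) (f v) := by
  obtain ⟨u, hu, p, hp⟩ := h
  exact ⟨f u, Set.mem_image_of_mem f hu, p.map f, (Walk.length_map f p).trans_le hp⟩

lemma kDomNum_le_ncard {S : Set V} (hS : G.IsKDomSet k S) : G.kDomNum k ≤ S.ncard :=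
  Nat.sInf_le ⟨S, hS, rfl⟩

lemma exists_isKDomSet_ncard_eq_kDomNum (G : SimpleGraph V) (k : ℕ) :
    ∃ S : Set V, G.IsKDomSet k S ∧ S.ncard = G.kDomNum k :=
  Nat.sInf_mem (s := {n | ∃ S : Set V, G.IsKDomSet k S ∧ S.ncard = n})
    ⟨_, Set.univ, fun v => ⟨v, Set.mem_univ v, Walk.nil, Nat.zero_le k⟩, rfl⟩

end SimpleGraph

lemma Set.exists_subset_not_sdiff_singleton {γ : Type*} [Finite γ] {P : Set γ → Prop}
    {D : Set γ} (hD : P D) (hempty : ¬ P ∅) :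
    ∃ E ⊆ D, P E ∧ ∃ t ∈ E, ¬ P (E \ {t}) := by
  obtain ⟨E, hED, hEmin⟩ := exists_minimal_le_of_wellFoundedLT P D hD
  obtain ⟨t, ht⟩ := Set.nonempty_iff_ne_empty.2 (fun h => hempty (h ▸ hEmin.prop))
  exact ⟨E, hED, hEmin.prop, t, ht, hEmin.not_prop_of_lt (Set.sdiff_singleton_ssubset.2 ht)⟩

namespace SimpleGraph.directProd

variable {α β : Type*} {G : SimpleGraph α} {H : SimpleGraph β} {k : ℕ}

def fst (G : SimpleGraph α) (H : SimpleGraph β) : G.directProd H →g G where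
  toFun := Prod.fst
  map_rel' h := h.1

def snd (G : SimpleGraph α) (H : SimpleGraph β) : G.directProd H →g H where
  toFun := Prod.snd
  map_rel' h := h.2

lemma isKDomSet_image_fst {S : Set (α × β)} {y : β}
    (h : ∀ x, (G.directProd H).KDominates k S (x, y)) : G.IsKDomSet k (Prod.fst '' S) :=
  fun x => (h x).map (fst G H)

lemma isKDomSet_image_snd {S : Set (α × β)}
    (h : ∀ y, ∃ x, (G.directProd H).KDominates k S (x, y)) : H.IsKDomSet k (Prod.snd '' S) :=
  fun y => (h y).elim fun _ hx => hx.map (snd G H)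

lemma exists_split_of_isKDomSet [Finite α] [Finite β] [Nonempty α] [Nonempty β]
    {D : Set (α × β)} (hD : (G.directProd H).IsKDomSet k D) :
    ∃ E ⊆ D, ∃ t ∈ E, H.IsKDomSet k (Prod.snd '' E) ∧
      G.IsKDomSet k (Prod.fst '' insert t (D \ E)) := by
  obtain ⟨E, hED, hE, t, ht, hEt⟩ := Set.exists_subset_not_sdiff_singleton
    (P := fun E => ∀ y, ∃ x, (G.directProd H).KDominates k E (x, y))
    (fun y => ⟨Classical.arbitrary α, hD _⟩)
    (fun h => by
      obtain ⟨_, _, hu, -⟩ := h (Classical.arbitrary β)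
      exact hu)
  refine ⟨E, hED, t, ht, isKDomSet_image_snd hE, ?_⟩
  obtain ⟨y₀, hy₀⟩ := not_forall.1 hEt
  refine isKDomSet_image_fst (H := H) (y := y₀) fun x => ?_
  obtain ⟨u, hu, p, hp⟩ := hD (x, y₀)
  refine ⟨u, ?_, p, hp⟩
  by_cases huE : u ∈ E
  · by_contra hne
    exact hy₀ ⟨x, u, ⟨huE, fun h => hne (Or.inl h)⟩, p, hp⟩
  · exact Or.inr ⟨hu, huE⟩

end SimpleGraph.directProd

theorem kDomNum_directProd_ge_general {α β : Type*} [Fintype α] [Fintype β]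
    (k : ℕ) (G : SimpleGraph α) (H : SimpleGraph β)
    (hG : G.Connected) (hH : H.Connected) :
    (G.kDomNum k : ℤ) + (H.kDomNum k : ℤ) - 1 ≤ ((G.directProd H).kDomNum k : ℤ) := by
  have := hG.nonempty
  have := hH.nonempty
  obtain ⟨D, hD, hDcard⟩ := (G.directProd H).exists_isKDomSet_ncard_eq_kDomNum k
  obtain ⟨E, hED, t, -, hHE, hGE⟩ := SimpleGraph.directProd.exists_split_of_isKDomSet hD
  have hG_le : G.kDomNum k ≤ (D \ E).ncard + 1 :=
    (SimpleGraph.kDomNum_le_ncard hGE).trans (le_trans Set.ncard_image_le (Set.ncard_insert_le t _))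
  have hH_le : H.kDomNum k ≤ E.ncard :=
    (SimpleGraph.kDomNum_le_ncard hHE).trans Set.ncard_image_le
  have hsplit := Set.ncard_sdiff_add_ncard_of_subset hED
  omega

/-- For connected graphs `G` and `H`, `γ_k(G × H) ≥ γ_k(G) + γ_k(H) − 1`. -/
theorem kDomNum_directProd_ge {α β : Type*} [Fintype α] [Fintype β]
    (k : ℕ) (hk : 1 ≤ k) (G : SimpleGraph α) (H : SimpleGraph β)
    (hG : G.Connected) (hH : H.Connected) :
    (G.kDomNum k : ℤ) + (H.kDomNum k : ℤ) - 1 ≤ ((G.directProd H).kDomNum k : ℤ) :=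
  kDomNum_directProd_ge_general k G H hG hH
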